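/- For every fixed linearization order of the two writes (1-before-0 or 0-before-1), there is a coin value v ∈ {0,1} such that if the coin C₁ does not take value v, every reader exits; hence, conditioned on any fixed order chosen before the coin flip, the exit probability is at least 1/2. -/

import Mathlib

/-! With `true` encoding both order A and coin value 1, the exit event is exactly `o ≠ C`.
Splitting on the value of the coin, independence and fairness give
`μ {o ≠ C} = μ {o = false} / 2 + μ {o = true} / 2`, and the two order events cover `Ω`. -/

open MeasureTheory

section
variable {Ω : Type*} [MeasurableSpace Ω] (μ : Measure Ω)

lemma measure_univ_le_add_bool (f : Ω → Bool) :
    μ Set.univ ≤ μ {ω | f ω = true} + μ {ω | f ω = false} := by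
  have hcover : Set.univ = {ω | f ω = true} ∪ {ω | f ω = false} := by
    ext ω; cases f ω <;> simp
  exact hcover ▸ measure_union_le _ _

lemma measure_setOf_ne_eq_add {o C : Ω → Bool} (hC : Measurable C) :
    μ {ω | o ω ≠ C ω} =
      μ ({ω | o ω = false} ∩ {ω | C ω = true}) + μ ({ω | o ω = true} ∩ {ω | C ω = false}) := by
  have hinter : {ω | o ω ≠ C ω} ∩ {ω | C ω = true} = {ω | o ω = false} ∩ {ω | C ω = true} := by
    ext ω; simp only [Set.mem_inter_iff, Set.mem_ofPred_eq]; cases o ω <;> cases C ω <;> decide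
  have hdiff : {ω | o ω ≠ C ω} \ {ω | C ω = true} = {ω | o ω = true} ∩ {ω | C ω = false} := by
    ext ω; simp only [Set.mem_inter_iff, Set.mem_sdiff, Set.mem_ofPred_eq]
    cases o ω <;> cases C ω <;> decide
  rw [← hinter, ← hdiff]
  exact (measure_inter_add_sdiff _ (hC (measurableSet_singleton true))).symm

end

theorem stmt_17_general {Ω : Type*} [MeasurableSpace Ω] (μ : Measure Ω)
    [IsProbabilityMeasure μ] (o C : Ω → Bool)
    (hC : Measurable C)
    (hfair : μ {ω | C ω = true} = 1 / 2 ∧ μ {ω | C ω = false} = 1 / 2)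
    (hindep : ∀ b b' : Bool,
      μ ({ω | o ω = b} ∩ {ω | C ω = b'}) = μ {ω | o ω = b} * μ {ω | C ω = b'}) :
    1 / 2 ≤ μ {ω | (o ω = true ∧ C ω ≠ true) ∨ (o ω = false ∧ C ω ≠ false)} := by
  have hexit : {ω | (o ω = true ∧ C ω ≠ true) ∨ (o ω = false ∧ C ω ≠ false)} =
      {ω | o ω ≠ C ω} := by
    ext ω; simp only [Set.mem_ofPred_eq]; cases o ω <;> cases C ω <;> decide
  rw [hexit, measure_setOf_ne_eq_add μ hC, hindep, hindep, hfair.1, hfair.2, ← add_mul, add_comm]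
  calc (1 : ENNReal) / 2 = μ Set.univ * (1 / 2) := by rw [measure_univ, one_mul]
    _ ≤ (μ {ω | o ω = true} + μ {ω | o ω = false}) * (1 / 2) := by
      gcongr; exact measure_univ_le_add_bool μ o

/-- Order `o : Ω → Bool` (with `true` = order A, `false` = order B) is fixed
before the coin flip; the coin `C` (with `true` = value 1, `false` = value 0)
is uniform and independent of `o`. The exit event is
`(o = A ∧ C ≠ 1) ∨ (o = B ∧ C ≠ 0)`; its probability is at least `1/2`. -/
theorem stmt_17 {Ω : Type*} [MeasurableSpace Ω] (μ : Measure Ω)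
    [IsProbabilityMeasure μ] (o C : Ω → Bool)
    (ho : Measurable o) (hC : Measurable C)
    (hfair : μ {ω | C ω = true} = 1 / 2 ∧ μ {ω | C ω = false} = 1 / 2)
    (hindep : ∀ b b' : Bool,
      μ ({ω | o ω = b} ∩ {ω | C ω = b'}) = μ {ω | o ω = b} * μ {ω | C ω = b'}) :
    1 / 2 ≤ μ {ω | (o ω = true ∧ C ω ≠ true) ∨ (o ω = false ∧ C ω ≠ false)} :=
  stmt_17_general μ o C hC hfair hindep
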